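/- arXiv:0904.0669 — 4 statements merged into one kernel-verified Lean document; each statement's English description precedes it below -/
import Mathlib

section
/- Let A, B, Q be elements of an associative algebra with Q invertible, satisfying QA = q^2 AQ, QB = q^{-2}BQ, AB - BA = -λ^{-1}Q^{-1}, where λ = q - q^{-1}. Define operators on the algebra by K▷f := QfQ^{-1}, K^{-1}▷f := Q^{-1}fQ, E▷f := Af - QfQ^{-1}A, F▷f := BfQ - q^2 fQB. Then (E∘F - F∘E)(f) = λ^{-1}(K▷f - K^{-1}▷f) for every f. -/
/-- With QA = q²AQ, QB = q⁻²BQ, AB - BA = -λ⁻¹Q⁻¹, the maps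
K▷f = QfQ⁻¹, K⁻¹▷f = Q⁻¹fQ, E▷f = Af - QfQ⁻¹A, F▷f = BfQ - q²fQB satisfy
(EF - FE)(f) = λ⁻¹(K▷f - K⁻¹▷f). -/
theorem stmt3 {L : Type*} [Ring L] [Algebra ℂ L] (q : ℂ) (hq : q ≠ 0) (hq2 : q ^ 2 ≠ 1)
    (lam : ℂ) (hlam : lam = q - q⁻¹)
    (A B Q Qi : L) (hQinv : Q * Qi = 1) (hQinv' : Qi * Q = 1)
    (hQA : Q * A = q ^ 2 • (A * Q)) (hQB : Q * B = q⁻¹ ^ 2 • (B * Q))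
    (hABBA : A * B - B * A = (-lam⁻¹) • Qi)
    (K Ki E F : L → L)
    (hK : ∀ f, K f = Q * f * Qi) (hKi : ∀ f, Ki f = Qi * f * Q)
    (hE : ∀ f, E f = A * f - Q * f * Qi * A)
    (hF : ∀ f, F f = B * f * Q - q ^ 2 • (f * Q * B)) :
    ∀ f, E (F f) - F (E f) = lam⁻¹ • (K f - Ki f) := by
  intro f
  have hq2' : (q : ℂ) ^ 2 ≠ 0 := pow_ne_zero 2 hq
  have hinv : q⁻¹ ^ 2 * q ^ 2 = 1 := by field_simp
  have hinv' : q ^ 2 * q⁻¹ ^ 2 = 1 := by field_simp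
  have hQQix : ∀ x : L, Q * (Qi * x) = x := by
    intro x; rw [← mul_assoc, hQinv, one_mul]
  have hQiQx : ∀ x : L, Qi * (Q * x) = x := by
    intro x; rw [← mul_assoc, hQinv', one_mul]
  have hQBx : ∀ x : L, Q * (B * x) = q⁻¹ ^ 2 • (B * (Q * x)) := by
    intro x; rw [← mul_assoc, hQB, smul_mul_assoc, mul_assoc]
  have hAQi : A * Qi = q ^ 2 • (Qi * A) := by
    have h := congrArg (fun y => Qi * (y * Qi)) hQA
    simpa only [mul_assoc, mul_smul_comm, smul_mul_assoc, hQQix, hQiQx, hQinv, hQinv', mul_one] using h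
  have hQiA : Qi * A = q⁻¹ ^ 2 • (A * Qi) := by
    rw [hAQi, smul_smul, hinv, one_smul]
  have hQiAx : ∀ x : L, Qi * (A * x) = q⁻¹ ^ 2 • (A * (Qi * x)) := by
    intro x; rw [← mul_assoc, hQiA, smul_mul_assoc, mul_assoc]
  have hABx : ∀ x : L, A * (B * x) = (-lam⁻¹) • (Qi * x) + B * (A * x) := by
    intro x
    have h := congrArg (fun y => y * x) hABBA
    simp only [sub_mul, smul_mul_assoc, mul_assoc] at h
    exact eq_add_of_sub_eq h
  have hAB : A * B = (-lam⁻¹) • Qi + B * A := eq_add_of_sub_eq hABBA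
  simp only [hE, hF, hK, hKi]
  simp only [mul_sub, sub_mul, mul_smul_comm, smul_mul_assoc, smul_sub, mul_assoc,
    hQQix, hQiQx, hQBx, hQiAx, hABx, hAB, mul_add, add_mul, smul_add, smul_smul,
    hinv, hinv', one_smul, neg_smul, mul_neg, neg_mul, hQinv, hQinv', mul_one]
  abel
end

section
/- In the real q-Weyl algebra A_q(n;R), the elements Q_j := λ^{-1}(y_j x_j - x_j y_j) (j ≤ n), Q_{n+1} := 1, satisfy: Q_k y_j = y_j Q_k for j < k, Q_k y_j = q² y_j Q_k for j ≥ k, Q_k x_j = x_j Q_k for j < k, Q_k x_j = q^{-2} x_j Q_k for j ≥ k; in particular all Q_k, Q_l commute. -/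
/-!
Unrolling the relation for `x_k y_k` from `Q_{n+1} = 1` gives the closed form `QWeyl.Q`,
`Q_k = q^{n+1-k} - ∑_{i=k}^{n} q^{i+1-k} y_i x_i`, hence the two recursions
`Q_k = q Q_{k+1} - q y_k x_k` and `x_k y_k = q² y_k x_k + (1 - q²) Q_{k+1}`.
For `j < k` every `y_i x_i` in the closed form has `i > j` and commutes with `x_j, y_j`.
For `k = j` the two recursions together with `[Q_{j+1}, y_j] = [Q_{j+1}, x_j] = 0` give the
`q^{±2}`-commutation, and for `k < j` it descends along `Q_k = q Q_{k+1} - q y_k x_k`, since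
`y_k x_k` already `q^{±2}`-commutes with `y_j, x_j`. Then `Q_k` commutes with every `y_i x_i`,
`i ≥ k`, hence with `Q_l` for `l ≥ k`.
-/

open Finset

section QCommute

variable {R A : Type*}

def QCommute [SMul R A] [Mul A] (s : R) (a b : A) : Prop :=
  a * b = s • (b * a)

section Semiring

variable [CommSemiring R] [Semiring A] [Algebra R A] {s t : R} {a b c : A}

theorem QCommute.mul_left (ha : QCommute s a c) (hb : QCommute t b c) :
    QCommute (s * t) (a * b) c := by
  unfold QCommute at *
  rw [mul_assoc, hb, mul_smul_comm, ← mul_assoc, ha, smul_mul_assoc, smul_smul, mul_comm t s,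
    mul_assoc]

theorem QCommute.mul_right (ha : QCommute s c a) (hb : QCommute t c b) :
    QCommute (s * t) c (a * b) := by
  unfold QCommute at *
  rw [← mul_assoc, ha, smul_mul_assoc, mul_assoc, hb, mul_smul_comm, smul_smul, ← mul_assoc]

theorem QCommute.smul_left (ha : QCommute s a c) (r : R) : QCommute s (r • a) c := by
  unfold QCommute at *
  rw [smul_mul_assoc, ha, mul_smul_comm, smul_comm]

theorem QCommute.commute (h : QCommute s a b) (hs : s = 1) : Commute a b := by
  rw [QCommute, hs, one_smul] at h
  exact h

end Semiring

theorem QCommute.sub_left [CommSemiring R] [Ring A] [Algebra R A] {s : R} {a b c : A}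
    (ha : QCommute s a c) (hb : QCommute s b c) : QCommute s (a - b) c := by
  unfold QCommute at *
  rw [sub_mul, mul_sub, ha, hb, smul_sub]

theorem QCommute.symm [Field R] [Ring A] [Algebra R A] {s : R} {a b : A} (hs : s ≠ 0)
    (h : QCommute s a b) : QCommute s⁻¹ b a := by
  unfold QCommute at *
  rw [h, inv_smul_smul₀ hs]

end QCommute

namespace QWeyl

variable {K A : Type*} [Field K] [Ring A] [Algebra K A] {q : K} {n : ℕ} {x y : ℕ → A}

structure Relations (q : K) (n : ℕ) (x y : ℕ → A) : Prop where
  yy : ∀ k l, 1 ≤ k → k < l → l ≤ n → QCommute q (y k) (y l)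
  xx : ∀ k l, 1 ≤ k → k < l → l ≤ n → QCommute q⁻¹ (x k) (x l)
  xy : ∀ k l, 1 ≤ k → k ≤ n → 1 ≤ l → l ≤ n → k ≠ l → QCommute q (x l) (y k)
  xyk : ∀ k, 1 ≤ k → k < n →
    x k * y k = q ^ 2 • (y k * x k)
      - (1 - q ^ 2) • (∑ j ∈ Ioc k n, q ^ (j - k) • (y j * x j))
      + ((1 - q ^ 2) * q ^ (n - k)) • (1 : A)
  xyn : x n * y n = q ^ 2 • (y n * x n) + (1 - q ^ 2) • (1 : A)

def Q (q : K) (n : ℕ) (x y : ℕ → A) (k : ℕ) : A :=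
  q ^ (n + 1 - k) • 1 - ∑ j ∈ Icc k n, q ^ (j + 1 - k) • (y j * x j)

theorem Q_succ (k : ℕ) :
    Q q n x y (k + 1) = q ^ (n - k) • 1 - ∑ j ∈ Ioc k n, q ^ (j - k) • (y j * x j) := by
  simp only [Q, Nat.add_sub_add_right, Icc_add_one_left_eq_Ioc]

theorem Q_self_add_one : Q q n x y (n + 1) = 1 := by
  simp [Q_succ]

theorem Q_eq_smul_Q_succ_sub {k : ℕ} (hk : k ≤ n) :
    Q q n x y k = q • Q q n x y (k + 1) - q • (y k * x k) := by
  have hsum : ∑ j ∈ Ioc k n, q ^ (j + 1 - k) • (y j * x j)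
      = q • ∑ j ∈ Ioc k n, q ^ (j - k) • (y j * x j) := by
    rw [smul_sum]
    refine sum_congr rfl fun j hj => ?_
    rw [smul_smul, ← pow_succ', Nat.sub_add_comm (mem_Ioc.mp hj).1.le]
  rw [Q, Q_succ, Icc_eq_cons_Ioc hk, sum_cons, hsum, Nat.sub_add_comm hk, pow_succ',
    Nat.add_sub_cancel_left, pow_one]
  module

theorem qCommute_Q_of_le {s : K} {z : A} {j : ℕ} (hjn : j ≤ n)
    (hj : QCommute s (Q q n x y j) z)
    (hz : ∀ k, 1 ≤ k → k < j → QCommute s (y k * x k) z) {k : ℕ} (hk : 1 ≤ k)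
    (hkj : k ≤ j) : QCommute s (Q q n x y k) z := by
  refine Nat.decreasingInduction' (P := fun i => QCommute s (Q q n x y i) z)
    (fun i hij hki ih => ?_) hkj hj
  rw [Q_eq_smul_Q_succ_sub (by omega)]
  exact (ih.smul_left q).sub_left ((hz i (by omega) hij).smul_left q)


namespace Relations

theorem commute_y_mul_x_y_of_lt (h : Relations q n x y) (hq : q ≠ 0) {j m : ℕ} (hj : 1 ≤ j)
    (hjm : j < m) (hm : m ≤ n) : Commute (y m * x m) (y j) :=
  (((h.yy j m hj hjm hm).symm hq).mul_left (h.xy j m hj (by omega) (by omega) hm hjm.ne)).commute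
    (inv_mul_cancel₀ hq)

theorem commute_y_mul_x_x_of_lt (h : Relations q n x y) (hq : q ≠ 0) {j m : ℕ} (hj : 1 ≤ j)
    (hjm : j < m) (hm : m ≤ n) : Commute (y m * x m) (x j) :=
  (((h.xy m j (by omega) hm hj (by omega) hjm.ne').symm hq).mul_left
    ((h.xx j m hj hjm hm).symm (inv_ne_zero hq))).commute (by rw [inv_inv, inv_mul_cancel₀ hq])

theorem qCommute_y_mul_x_y_of_lt (h : Relations q n x y) {k j : ℕ} (hk : 1 ≤ k) (hkj : k < j)
    (hj : j ≤ n) : QCommute (q ^ 2) (y k * x k) (y j) :=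
  sq q ▸ (h.yy k j hk hkj hj).mul_left (h.xy j k (by omega) hj hk (by omega) hkj.ne')

theorem qCommute_y_mul_x_x_of_lt (h : Relations q n x y) (hq : q ≠ 0) {k j : ℕ} (hk : 1 ≤ k)
    (hkj : k < j) (hj : j ≤ n) : QCommute (q⁻¹ ^ 2) (y k * x k) (x j) :=
  sq q⁻¹ ▸ ((h.xy k j hk (by omega) (by omega) hj hkj.ne).symm hq).mul_left (h.xx k j hk hkj hj)

theorem x_mul_y_self (h : Relations q n x y) {k : ℕ} (hk : 1 ≤ k) (hkn : k ≤ n) :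
    x k * y k = q ^ 2 • (y k * x k) + (1 - q ^ 2) • Q q n x y (k + 1) := by
  rcases hkn.lt_or_eq with hlt | rfl
  · rw [h.xyk k hk hlt, Q_succ]
    module
  · rw [h.xyn, Q_self_add_one]

theorem smul_commutator_eq_Q (h : Relations q n x y) (hq : q ≠ 0) (hq2 : q ^ 2 ≠ 1) {k : ℕ}
    (hk : 1 ≤ k) (hkn : k ≤ n) :
    (q - q⁻¹)⁻¹ • (y k * x k - x k * y k) = Q q n x y k := by
  have hscalar : (q - q⁻¹)⁻¹ * (1 - q ^ 2) = -q := by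
    have : q ^ 2 - 1 ≠ 0 := sub_ne_zero.mpr hq2
    field_simp
    ring
  have hcomm : y k * x k - x k * y k = (1 - q ^ 2) • (y k * x k - Q q n x y (k + 1)) := by
    rw [h.x_mul_y_self hk hkn]
    module
  rw [hcomm, smul_smul, hscalar, Q_eq_smul_Q_succ_sub hkn]
  module

theorem commute_Q_y_of_lt (h : Relations q n x y) (hq : q ≠ 0) {j k : ℕ} (hj : 1 ≤ j)
    (hjk : j < k) : Commute (Q q n x y k) (y j) :=
  ((Commute.one_left _).smul_left _).sub_left <| Commute.sum_left _ _ _ fun _ hi =>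
    (h.commute_y_mul_x_y_of_lt hq hj (hjk.trans_le (mem_Icc.mp hi).1) (mem_Icc.mp hi).2).smul_left _

theorem commute_Q_x_of_lt (h : Relations q n x y) (hq : q ≠ 0) {j k : ℕ} (hj : 1 ≤ j)
    (hjk : j < k) : Commute (Q q n x y k) (x j) :=
  ((Commute.one_left _).smul_left _).sub_left <| Commute.sum_left _ _ _ fun _ hi =>
    (h.commute_y_mul_x_x_of_lt hq hj (hjk.trans_le (mem_Icc.mp hi).1) (mem_Icc.mp hi).2).smul_left _

theorem qCommute_Q_y_self (h : Relations q n x y) (hq : q ≠ 0) {k : ℕ} (hk : 1 ≤ k)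
    (hkn : k ≤ n) : QCommute (q ^ 2) (Q q n x y k) (y k) := by
  have hcomm := (h.commute_Q_y_of_lt hq hk k.lt_succ_self).eq
  rw [QCommute, Q_eq_smul_Q_succ_sub hkn]
  simp only [sub_mul, mul_sub, smul_mul_assoc, mul_smul_comm, mul_assoc]
  rw [hcomm, h.x_mul_y_self hk hkn]
  simp only [mul_add, mul_smul_comm]
  module

theorem qCommute_x_Q_self (h : Relations q n x y) (hq : q ≠ 0) {k : ℕ} (hk : 1 ≤ k)
    (hkn : k ≤ n) : QCommute (q ^ 2) (x k) (Q q n x y k) := by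
  have hcomm := (h.commute_Q_x_of_lt hq hk k.lt_succ_self).eq
  rw [QCommute, Q_eq_smul_Q_succ_sub hkn]
  simp only [sub_mul, mul_sub, smul_mul_assoc, mul_smul_comm, mul_assoc]
  rw [← hcomm, ← mul_assoc (x k) (y k) (x k), h.x_mul_y_self hk hkn]
  simp only [add_mul, smul_mul_assoc, mul_assoc]
  module

theorem qCommute_Q_y_of_le (h : Relations q n x y) (hq : q ≠ 0) {k j : ℕ} (hk : 1 ≤ k)
    (hkj : k ≤ j) (hjn : j ≤ n) : QCommute (q ^ 2) (Q q n x y k) (y j) :=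
  qCommute_Q_of_le hjn (h.qCommute_Q_y_self hq (by omega) hjn)
    (fun _ hi hij => h.qCommute_y_mul_x_y_of_lt hi hij hjn) hk hkj

theorem qCommute_Q_x_of_le (h : Relations q n x y) (hq : q ≠ 0) {k j : ℕ} (hk : 1 ≤ k)
    (hkj : k ≤ j) (hjn : j ≤ n) : QCommute (q⁻¹ ^ 2) (Q q n x y k) (x j) :=
  qCommute_Q_of_le hjn
    (inv_pow q 2 ▸ (h.qCommute_x_Q_self hq (by omega) hjn).symm (pow_ne_zero 2 hq))
    (fun _ hi hij => h.qCommute_y_mul_x_x_of_lt hq hi hij hjn) hk hkj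

theorem commute_Q_Q (h : Relations q n x y) (hq : q ≠ 0) {k l : ℕ} (hk : 1 ≤ k) (hkl : k ≤ l) :
    Commute (Q q n x y k) (Q q n x y l) :=
  ((Commute.one_right _).smul_right _).sub_right <| Commute.sum_right _ _ _ fun _ hi =>
    (((h.qCommute_Q_y_of_le hq hk (hkl.trans (mem_Icc.mp hi).1) (mem_Icc.mp hi).2).mul_right
      (h.qCommute_Q_x_of_le hq hk (hkl.trans (mem_Icc.mp hi).1) (mem_Icc.mp hi).2)).commute
        (by rw [inv_pow, mul_inv_cancel₀ (pow_ne_zero 2 hq)])).smul_right _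

end Relations

end QWeyl

theorem stmt11_general {A : Type*} [Ring A] [Algebra ℂ A]
    (n : ℕ)
    (q : ℂ) (hq : ‖q‖ = 1) (hq4 : q ^ 4 ≠ 1)
    (lam : ℂ) (hlam : lam = q - q⁻¹)
    (x y : ℕ → A)
    (hyy : ∀ k l, 1 ≤ k → k < l → l ≤ n → y k * y l = q • (y l * y k))
    (hxx : ∀ k l, 1 ≤ k → k < l → l ≤ n → x k * x l = q⁻¹ • (x l * x k))
    (hxy : ∀ k l, 1 ≤ k → k ≤ n → 1 ≤ l → l ≤ n → k ≠ l →
      x l * y k = q • (y k * x l))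
    (hxyk : ∀ k, 1 ≤ k → k < n →
      x k * y k = q ^ 2 • (y k * x k)
        - (1 - q ^ 2) • (∑ j ∈ Finset.Ioc k n, q ^ (j - k) • (y j * x j))
        + ((1 - q ^ 2) * q ^ (n - k)) • (1 : A))
    (hxyn : x n * y n = q ^ 2 • (y n * x n) + (1 - q ^ 2) • (1 : A))
    (Q : ℕ → A)
    (hQdef : ∀ k, 1 ≤ k → k ≤ n → Q k = lam⁻¹ • (y k * x k - x k * y k))
    (hQtop : Q (n + 1) = 1) :
    (∀ j k, 1 ≤ j → j ≤ n → 1 ≤ k → k ≤ n →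
      (j < k → Q k * y j = y j * Q k ∧ Q k * x j = x j * Q k) ∧
      (k ≤ j → Q k * y j = q ^ 2 • (y j * Q k) ∧
        Q k * x j = q⁻¹ ^ 2 • (x j * Q k))) ∧
    (∀ k l, 1 ≤ k → k ≤ n + 1 → 1 ≤ l → l ≤ n + 1 → Q k * Q l = Q l * Q k) := by
  have hq0 : q ≠ 0 := norm_ne_zero_iff.mp (hq ▸ one_ne_zero)
  have hq2 : q ^ 2 ≠ 1 := fun h2 => hq4 (by rw [show 4 = 2 * 2 from rfl, pow_mul, h2, one_pow])
  have h : QWeyl.Relations q n x y := ⟨hyy, hxx, hxy, hxyk, hxyn⟩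
  have hQ : ∀ k, 1 ≤ k → k ≤ n + 1 → Q k = QWeyl.Q q n x y k := by
    intro k hk hkn
    rcases hkn.lt_or_eq with hlt | rfl
    · rw [hQdef k hk (by omega), hlam, h.smul_commutator_eq_Q hq0 hq2 hk (by omega)]
    · rw [hQtop, QWeyl.Q_self_add_one]
  refine ⟨fun j k hj hjn hk hkn => ?_, fun k l hk hkn hl hln => ?_⟩
  · rw [hQ k hk (by omega)]
    exact ⟨fun hjk => ⟨(h.commute_Q_y_of_lt hq0 hj hjk).eq, (h.commute_Q_x_of_lt hq0 hj hjk).eq⟩,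
      fun hkj => ⟨h.qCommute_Q_y_of_le hq0 hk hkj hjn, h.qCommute_Q_x_of_le hq0 hk hkj hjn⟩⟩
  · rw [hQ k hk hkn, hQ l hl hln]
    rcases le_total k l with hkl | hlk
    · exact (h.commute_Q_Q hq0 hk hkl).eq
    · exact (h.commute_Q_Q hq0 hl hlk).eq.symm

/-- In the real q-Weyl algebra A_q(n;ℝ), the elements
Q_j = λ⁻¹(y_jx_j - x_jy_j), Q_{n+1} = 1, satisfy Q_k y_j = y_j Q_k (j < k),
Q_k y_j = q² y_j Q_k (j ≥ k), Q_k x_j = x_j Q_k (j < k), Q_k x_j = q⁻² x_j Q_k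
(j ≥ k); in particular all Q_k, Q_l commute. -/
theorem stmt11 {A : Type*} [Ring A] [Algebra ℂ A] [StarRing A] [StarModule ℂ A]
    (n : ℕ) (hn : 1 ≤ n)
    (q : ℂ) (hq : ‖q‖ = 1) (hq4 : q ^ 4 ≠ 1)
    (lam : ℂ) (hlam : lam = q - q⁻¹)
    (x y : ℕ → A)
    (hxs : ∀ k, 1 ≤ k → k ≤ n → star (x k) = x k)
    (hys : ∀ k, 1 ≤ k → k ≤ n → star (y k) = y k)
    (hyy : ∀ k l, 1 ≤ k → k < l → l ≤ n → y k * y l = q • (y l * y k))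
    (hxx : ∀ k l, 1 ≤ k → k < l → l ≤ n → x k * x l = q⁻¹ • (x l * x k))
    (hxy : ∀ k l, 1 ≤ k → k ≤ n → 1 ≤ l → l ≤ n → k ≠ l →
      x l * y k = q • (y k * x l))
    (hxyk : ∀ k, 1 ≤ k → k < n →
      x k * y k = q ^ 2 • (y k * x k)
        - (1 - q ^ 2) • (∑ j ∈ Finset.Ioc k n, q ^ (j - k) • (y j * x j))
        + ((1 - q ^ 2) * q ^ (n - k)) • (1 : A))
    (hxyn : x n * y n = q ^ 2 • (y n * x n) + (1 - q ^ 2) • (1 : A))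
    (Q : ℕ → A)
    (hQdef : ∀ k, 1 ≤ k → k ≤ n → Q k = lam⁻¹ • (y k * x k - x k * y k))
    (hQtop : Q (n + 1) = 1) :
    (∀ j k, 1 ≤ j → j ≤ n → 1 ≤ k → k ≤ n →
      (j < k → Q k * y j = y j * Q k ∧ Q k * x j = x j * Q k) ∧
      (k ≤ j → Q k * y j = q ^ 2 • (y j * Q k) ∧
        Q k * x j = q⁻¹ ^ 2 • (x j * Q k))) ∧
    (∀ k l, 1 ≤ k → k ≤ n + 1 → 1 ≤ l → l ≤ n + 1 → Q k * Q l = Q l * Q k) :=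
  stmt11_general n q hq hq4 lam hlam x y hyy hxx hxy hxyk hxyn Q hQdef hQtop
end

section
/- Let q ≠ 0, λ = q - q^{-1}, and let ρ_j (invertible), A_j, B_j satisfy A_jB_j - B_jA_j = λ^{-1}(ρ_j - ρ_j^{-1}) together with ρ_jA_j = q²A_jρ_j and ρ_jB_j = q^{-2}B_jρ_j. Then the operators E_j▷f = A_jf - ρ_jfρ_j^{-1}A_j and F_j▷f = B_jfρ_j - q²fρ_jB_j on the algebra satisfy (E_j∘F_j - F_j∘E_j)(f) = λ^{-1}(ρ_jfρ_j^{-1} - ρ_j^{-1}fρ_j) for all f. -/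
/-!
Since `ρ B ρ⁻¹ = q⁻² B`, the operator `F` is `f ↦ [B, f] ρ`. Expanding `E ∘ F - F ∘ E` with this
form, the terms containing `A f B` cancel outright and the remaining ones cancel after moving `ρ`
past `A` and `B`, which costs `q²` and `q⁻²` respectively. What is left is
`[A, B] f ρ - ρ f [A, B]`, and substituting `[A, B] = λ⁻¹ (ρ - ρ⁻¹)` gives the claim.
-/

section ConjugationRelations

variable {R L : Type*} [CommRing R] [Ring L] [Algebra R L] {s t : R} {ρ : Lˣ} {A B : L}

theorem mul_units_eq_smul_units_mul (hst : s * t = 1) (hB : ρ * B = t • (B * ρ)) :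
    B * ρ = s • (ρ * B) := by
  rw [hB, smul_smul, hst, one_smul]

theorem units_inv_mul_mul_units (hts : t * s = 1) (hA : ρ * A = s • (A * ρ)) :
    ↑ρ⁻¹ * A * ρ = t • A := by
  rw [mul_assoc, mul_units_eq_smul_units_mul hts hA, mul_smul_comm, ← mul_assoc,
    Units.inv_mul, one_mul]

theorem mul_units_sub_smul_eq_commutator_mul (hst : s * t = 1) (hB : ρ * B = t • (B * ρ))
    (f : L) : B * f * ρ - s • (f * ρ * B) = (B * f - f * B) * ρ := by
  rw [mul_assoc f, ← mul_smul_comm, ← mul_units_eq_smul_units_mul hst hB, sub_mul, mul_assoc f]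

theorem comp_sub_comp_eq_commutator (hst : s * t = 1) (hA : ρ * A = s • (A * ρ))
    (hB : ρ * B = t • (B * ρ)) (E F : L → L)
    (hE : ∀ f, E f = A * f - ρ * f * ↑ρ⁻¹ * A)
    (hF : ∀ f, F f = B * f * ρ - s • (f * ρ * B)) (f : L) :
    E (F f) - F (E f) = (A * B - B * A) * f * ρ - ρ * f * (A * B - B * A) := by
  have hts : t * s = 1 := by rw [mul_comm, hst]
  have hBA : B * ρ * f * ↑ρ⁻¹ * A * ρ = ρ * B * f * A := by
    calc B * ρ * f * ↑ρ⁻¹ * A * ρ = (B * ρ) * f * (↑ρ⁻¹ * A * ρ) := by simp only [mul_assoc]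
      _ = ρ * B * f * A := by
          rw [units_inv_mul_mul_units hts hA, mul_units_eq_smul_units_mul hst hB]
          simp only [smul_mul_assoc, mul_smul_comm, smul_smul, hts, one_smul]
  have hAB : ρ * f * ↑ρ⁻¹ * A * B * ρ = ρ * f * (A * B) := by
    have hρB : ↑ρ⁻¹ * B * ρ = s • B := units_inv_mul_mul_units hst hB
    calc ρ * f * ↑ρ⁻¹ * A * B * ρ = ρ * f * ((↑ρ⁻¹ * A * ρ) * (↑ρ⁻¹ * B * ρ)) := by
          simp only [mul_assoc, Units.mul_inv_cancel_left]
      _ = ρ * f * (A * B) := by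
          rw [units_inv_mul_mul_units hts hA, hρB, smul_mul_smul_comm, hts, one_smul]
  simp only [hE, hF, mul_units_sub_smul_eq_commutator_mul hst hB]
  linear_combination (norm := noncomm_ring) hBA - hAB - ρ * (B * f - f * B) * Units.mul_inv ρ * A

end ConjugationRelations

theorem stmt15_general {L : Type*} [Ring L] [Algebra ℂ L]
    (q : ℂ) (hq : q ≠ 0)
    (lam : ℂ)
    (ρ ρi A B : L) (hρinv : ρ * ρi = 1) (hρinv' : ρi * ρ = 1)
    (hρA : ρ * A = q ^ 2 • (A * ρ)) (hρB : ρ * B = q⁻¹ ^ 2 • (B * ρ))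
    (hABBA : A * B - B * A = lam⁻¹ • (ρ - ρi))
    (E F : L → L)
    (hE : ∀ f, E f = A * f - ρ * f * ρi * A)
    (hF : ∀ f, F f = B * f * ρ - q ^ 2 • (f * ρ * B)) :
    ∀ f : L, E (F f) - F (E f) = lam⁻¹ • (ρ * f * ρi - ρi * f * ρ) := by
  intro f
  have hqq : q ^ 2 * q⁻¹ ^ 2 = 1 := by rw [← mul_pow, mul_inv_cancel₀ hq, one_pow]
  rw [comp_sub_comp_eq_commutator (ρ := ⟨ρ, ρi, hρinv, hρinv'⟩) hqq hρA hρB E F hE hF f, hABBA]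
  simp only [smul_mul_assoc, mul_smul_comm, ← smul_sub]
  congr 1
  noncomm_ring [hρinv, hρinv']

/-- With A_jB_j - B_jA_j = λ⁻¹(ρ_j - ρ_j⁻¹), ρ_jA_j = q²A_jρ_j,
ρ_jB_j = q⁻²B_jρ_j, the maps E_j▷f = A_jf - ρ_jfρ_j⁻¹A_j and
F_j▷f = B_jfρ_j - q²fρ_jB_j satisfy
(E_jF_j - F_jE_j)(f) = λ⁻¹(ρ_jfρ_j⁻¹ - ρ_j⁻¹fρ_j). -/
theorem stmt15 {L : Type*} [Ring L] [Algebra ℂ L]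
    (q : ℂ) (hq : q ≠ 0) (hq2 : q ^ 2 ≠ 1)
    (lam : ℂ) (hlam : lam = q - q⁻¹)
    (ρ ρi A B : L) (hρinv : ρ * ρi = 1) (hρinv' : ρi * ρ = 1)
    (hρA : ρ * A = q ^ 2 • (A * ρ)) (hρB : ρ * B = q⁻¹ ^ 2 • (B * ρ))
    (hABBA : A * B - B * A = lam⁻¹ • (ρ - ρi))
    (E F : L → L)
    (hE : ∀ f, E f = A * f - ρ * f * ρi * A)
    (hF : ∀ f, F f = B * f * ρ - q ^ 2 • (f * ρ * B)) :
    ∀ f : L, E (F f) - F (E f) = lam⁻¹ • (ρ * f * ρi - ρi * f * ρ) :=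
  stmt15_general q hq lam ρ ρi A B hρinv hρinv' hρA hρB hABBA E F hE hF
end

section
/- In the setting of Lemma 4.1 (real q-Weyl algebra represented with relations (rhoy)-(rhon) and Q-relations), for k < n the operators A_k := iλ^{-1}q_0^{-1}q^{-1}Q_{k+1}^{-1}x_{k+1}y_k satisfy the q-commutation A_{k-1}A_k = q A_k A_{k-1} + λ^{-1}q^{-1}Q_k^{-1}x_{k+1}y_{k-1}. -/
/-!
Write `A_{k-1} = c P` and `A_k = c R` with `P = Q_k⁻¹ x_k y_{k-1}`, `R = Q_{k+1}⁻¹ x_{k+1} y_k`.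
Moving the `Q⁻¹` factors to the left and sorting the generators, `q PR` and `RP` both become
`Q_k⁻¹ Q_{k+1}⁻¹ x_{k+1} (·) y_{k-1}`, with middle factor `x_k y_k`, resp. `y_k x_k`.
Hence `q (PR - q RP)` has middle factor `x_k y_k - q² y_k x_k = (1 - q²) Q_{k+1}`, which cancels
`Q_{k+1}⁻¹` up to a power of `q`; with `c² = -λ⁻² q⁻³` and `λ q = q² - 1` the scalars come out
as `λ⁻¹ q⁻¹`.
-/

section QCommutation

variable {𝕜 A : Type*} [Field 𝕜] [Ring A] [Algebra 𝕜 A]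

lemma mul_mul_eq_smul_of_mul_eq_smul {Q a b : A} {s t : 𝕜}
    (ha : Q * a = s • (a * Q)) (hb : Q * b = t • (b * Q)) :
    Q * (a * b) = (s * t) • (a * b * Q) := by
  rw [← mul_assoc, ha, smul_mul_assoc, mul_assoc, hb, mul_smul_comm, smul_smul, mul_assoc]

lemma Units.inv_mul_mul_eq_smul {u : Aˣ} {a : A} {s : 𝕜} (hs : s ≠ 0)
    (h : ↑u * a = s⁻¹ • (a * ↑u)) : ↑u⁻¹ * (a * ↑u) = s • a := by
  rw [← (eq_inv_smul_iff₀ hs).1 h, mul_smul_comm, Units.inv_mul_cancel_left]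

lemma smul_reorder_of_qcomm {q : 𝕜} (hq : q ≠ 0) {x₂ x₃ y₁ y₂ : A}
    (hxx : x₂ * x₃ = q⁻¹ • (x₃ * x₂)) (hyy : y₁ * y₂ = q • (y₂ * y₁))
    (hxy : x₃ * y₁ = q • (y₁ * x₃)) :
    q • (x₂ * y₁ * x₃ * y₂) = x₃ * (x₂ * y₂) * y₁ :=
  calc q • (x₂ * y₁ * x₃ * y₂) = x₂ * (q • (y₁ * x₃)) * y₂ := by
        rw [mul_smul_comm, smul_mul_assoc]; noncomm_ring
    _ = (q⁻¹ • (x₃ * x₂)) * (q • (y₂ * y₁)) := by rw [← hxy, ← hxx, ← hyy]; noncomm_ring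
    _ = x₃ * (x₂ * y₂) * y₁ := by
        rw [smul_mul_smul_comm, inv_mul_cancel₀ hq, one_smul]; noncomm_ring

lemma qcommutator_eq (q : 𝕜) (hq : q ≠ 0) (Q₂ Q₃ : Aˣ) (x₂ x₃ y₁ y₂ : A)
    (hQQ : Commute (Q₂ : A) Q₃) (hQ₃x₂ : Commute (Q₃ : A) x₂) (hQ₃y₁ : Commute (Q₃ : A) y₁)
    (hQ₂x₃ : ↑Q₂ * x₃ = q⁻¹ ^ 2 • (x₃ * Q₂)) (hQ₂y₂ : ↑Q₂ * y₂ = q ^ 2 • (y₂ * Q₂))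
    (hQ₃x₃ : ↑Q₃ * x₃ = q⁻¹ ^ 2 • (x₃ * Q₃))
    (hxx : x₂ * x₃ = q⁻¹ • (x₃ * x₂)) (hyy : y₁ * y₂ = q • (y₂ * y₁))
    (hxy : x₃ * y₁ = q • (y₁ * x₃))
    (hxy₂ : x₂ * y₂ = Q₃ - q • (Q₂ : A)) (hyx₂ : y₂ * x₂ = Q₃ - q⁻¹ • (Q₂ : A)) :
    ↑Q₂⁻¹ * x₂ * y₁ * (↑Q₃⁻¹ * x₃ * y₂) - q • (↑Q₃⁻¹ * x₃ * y₂ * (↑Q₂⁻¹ * x₂ * y₁))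
      = (q * (1 - q ^ 2)) • (↑Q₂⁻¹ * x₃ * y₁) := by
  have hQ₂ : Commute (↑Q₂⁻¹ : A) (x₃ * y₂) := by
    refine Commute.units_inv_left ?_
    have h := mul_mul_eq_smul_of_mul_eq_smul hQ₂x₃ hQ₂y₂
    rwa [← mul_pow, inv_mul_cancel₀ hq, one_pow, one_smul] at h
  have hQ₃ : Commute (↑Q₃⁻¹ : A) (x₂ * y₁) := (hQ₃x₂.mul_right hQ₃y₁).units_inv_left
  have hQinv : Commute (↑Q₂⁻¹ : A) ↑Q₃⁻¹ := hQQ.units_inv_left.units_inv_right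
  have hPR : q • (↑Q₂⁻¹ * x₂ * y₁ * (↑Q₃⁻¹ * x₃ * y₂))
      = ↑Q₂⁻¹ * ↑Q₃⁻¹ * (x₃ * (x₂ * y₂) * y₁) := by
    rw [← smul_reorder_of_qcomm hq hxx hyy hxy, mul_smul_comm]
    congr 1
    calc ↑Q₂⁻¹ * x₂ * y₁ * (↑Q₃⁻¹ * x₃ * y₂) = ↑Q₂⁻¹ * ((x₂ * y₁) * ↑Q₃⁻¹) * x₃ * y₂ := by
          noncomm_ring
      _ = _ := by rw [← hQ₃.eq]; noncomm_ring
  have hRP : ↑Q₃⁻¹ * x₃ * y₂ * (↑Q₂⁻¹ * x₂ * y₁) = ↑Q₂⁻¹ * ↑Q₃⁻¹ * (x₃ * (y₂ * x₂) * y₁) := by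
    calc ↑Q₃⁻¹ * x₃ * y₂ * (↑Q₂⁻¹ * x₂ * y₁) = ↑Q₃⁻¹ * ((x₃ * y₂) * ↑Q₂⁻¹) * x₂ * y₁ := by
          noncomm_ring
      _ = _ := by rw [← hQ₂.eq, ← mul_assoc, ← hQinv.eq]; noncomm_ring
  have hweyl : x₂ * y₂ - q ^ 2 • (y₂ * x₂) = (1 - q ^ 2) • (Q₃ : A) := by
    rw [hxy₂, hyx₂, smul_sub, smul_smul, sq, mul_assoc, mul_inv_cancel₀ hq, mul_one]
    module
  have hconj : ↑Q₃⁻¹ * (x₃ * ↑Q₃) = q ^ 2 • x₃ :=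
    Units.inv_mul_mul_eq_smul (pow_ne_zero 2 hq) (by rwa [← inv_pow])
  apply smul_right_injective A hq
  dsimp only
  calc q • (↑Q₂⁻¹ * x₂ * y₁ * (↑Q₃⁻¹ * x₃ * y₂) - q • (↑Q₃⁻¹ * x₃ * y₂ * (↑Q₂⁻¹ * x₂ * y₁)))
      = ↑Q₂⁻¹ * ↑Q₃⁻¹ * (x₃ * (x₂ * y₂ - q ^ 2 • (y₂ * x₂)) * y₁) := by
        rw [smul_sub, hPR, hRP, smul_smul, ← sq]
        simp only [mul_sub, sub_mul, mul_smul_comm, smul_mul_assoc]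
    _ = (1 - q ^ 2) • (↑Q₂⁻¹ * (↑Q₃⁻¹ * (x₃ * ↑Q₃)) * y₁) := by
        rw [hweyl, mul_smul_comm, smul_mul_assoc, mul_smul_comm]; noncomm_ring
    _ = q • ((q * (1 - q ^ 2)) • (↑Q₂⁻¹ * x₃ * y₁)) := by
        rw [hconj, mul_smul_comm, smul_mul_assoc, smul_smul, smul_smul]; noncomm_ring

end QCommutation

lemma coeff_sq_mul_qcommutator_coeff {q q₀ lam : ℂ} (hq : q ≠ 0) (hq₀ : q₀ * q₀ = q)
    (hlam : lam = q - q⁻¹) :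
    (Complex.I * lam⁻¹ * q₀⁻¹ * q⁻¹) * (Complex.I * lam⁻¹ * q₀⁻¹ * q⁻¹) * (q * (1 - q ^ 2))
      = lam⁻¹ * q⁻¹ := by
  rcases eq_or_ne lam 0 with hl | hl
  · simp [hl]
  have hq₀ne : q₀ ≠ 0 := by rintro rfl; exact hq (by simp [← hq₀])
  have hlq : lam * q = q ^ 2 - 1 := by rw [hlam]; field_simp
  field_simp
  rw [Complex.I_sq]
  linear_combination (-lam) * hq₀ - hlq

theorem stmt16_general {L : Type*} [Ring L] [Algebra ℂ L]
    (n : ℕ) (φ : ℝ)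
    (q q₀ : ℂ) (hq : q = Complex.exp (Complex.I * φ))
    (hq0 : q₀ = Complex.exp (Complex.I * φ / 2))
    (lam : ℂ) (hlam : lam = q - q⁻¹)
    (x y Q Qi : ℕ → L)
    (hQinv : ∀ k, 1 ≤ k → k ≤ n + 1 → Q k * Qi k = 1 ∧ Qi k * Q k = 1)
    (hQQ : ∀ k l, Q k * Q l = Q l * Q k)
    (hyy : ∀ k l, 1 ≤ k → k < l → l ≤ n → y k * y l = q • (y l * y k))
    (hxx : ∀ k l, 1 ≤ k → k < l → l ≤ n → x k * x l = q⁻¹ • (x l * x k))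
    (hxy : ∀ k l, 1 ≤ k → k ≤ n → 1 ≤ l → l ≤ n → k ≠ l →
      x l * y k = q • (y k * x l))
    (hQy : ∀ k j, 1 ≤ j → j ≤ n → 1 ≤ k → k ≤ n + 1 →
      (j < k → Q k * y j = y j * Q k) ∧ (k ≤ j → Q k * y j = q ^ 2 • (y j * Q k)))
    (hQx : ∀ k j, 1 ≤ j → j ≤ n → 1 ≤ k → k ≤ n + 1 →
      (j < k → Q k * x j = x j * Q k) ∧ (k ≤ j → Q k * x j = q⁻¹ ^ 2 • (x j * Q k)))
    (hyx : ∀ k, 1 ≤ k → k ≤ n → y k * x k = Q (k + 1) - q⁻¹ • Q k)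
    (hxyQ : ∀ k, 1 ≤ k → k ≤ n → x k * y k = Q (k + 1) - q • Q k)
    (A : ℕ → L)
    (hA : ∀ k, 1 ≤ k → k < n →
      A k = (Complex.I * lam⁻¹ * q₀⁻¹ * q⁻¹) • (Qi (k + 1) * x (k + 1) * y k)) :
    ∀ k, 2 ≤ k → k < n →
      A (k - 1) * A k = q • (A k * A (k - 1))
        + (lam⁻¹ * q⁻¹) • (Qi k * x (k + 1) * y (k - 1)) := by
  intro k hk hkn
  obtain ⟨j, rfl⟩ : ∃ j, k = j + 1 := ⟨k - 1, by omega⟩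
  rw [Nat.add_sub_cancel]
  have hqne : q ≠ 0 := hq ▸ Complex.exp_ne_zero _
  have hq₀ : q₀ * q₀ = q := by rw [hq0, hq, ← Complex.exp_add]; ring_nf
  let U (i : ℕ) (h₁ : 1 ≤ i) (h₂ : i ≤ n + 1) : Lˣ :=
    ⟨Q i, Qi i, (hQinv i h₁ h₂).1, (hQinv i h₁ h₂).2⟩
  have key : Qi (j + 1) * x (j + 1) * y j * (Qi (j + 1 + 1) * x (j + 1 + 1) * y (j + 1))
      - q • (Qi (j + 1 + 1) * x (j + 1 + 1) * y (j + 1) * (Qi (j + 1) * x (j + 1) * y j))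
      = (q * (1 - q ^ 2)) • (Qi (j + 1) * x (j + 1 + 1) * y j) := qcommutator_eq q hqne
    (U (j + 1) (by omega) (by omega)) (U (j + 1 + 1) (by omega) (by omega))
    (x (j + 1)) (x (j + 1 + 1)) (y j) (y (j + 1)) (hQQ _ _)
    ((hQx _ _ (by omega) (by omega) (by omega) (by omega)).1 (by omega))
    ((hQy _ _ (by omega) (by omega) (by omega) (by omega)).1 (by omega))
    ((hQx _ _ (by omega) (by omega) (by omega) (by omega)).2 (by omega))
    ((hQy _ _ (by omega) (by omega) (by omega) (by omega)).2 le_rfl)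
    ((hQx _ _ (by omega) (by omega) (by omega) (by omega)).2 le_rfl)
    (hxx _ _ (by omega) (by omega) (by omega)) (hyy _ _ (by omega) (by omega) (by omega))
    (hxy _ _ (by omega) (by omega) (by omega) (by omega) (by omega))
    (hxyQ _ (by omega) (by omega)) (hyx _ (by omega) (by omega))
  rw [hA j (by omega) (by omega), hA (j + 1) (by omega) (by omega), smul_mul_smul_comm,
    smul_mul_smul_comm, sub_eq_iff_eq_add.1 key, smul_add, smul_smul, smul_comm q,
    coeff_sq_mul_qcommutator_coeff hqne hq₀ hlam, smul_comm _ q, add_comm]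

/-- In the setting of Lemma 4.1 (represented real q-Weyl algebra),
for 2 ≤ k < n the operators A_k = iλ⁻¹q₀⁻¹q⁻¹Q_{k+1}⁻¹x_{k+1}y_k satisfy
A_{k-1}A_k = q·A_kA_{k-1} + λ⁻¹q⁻¹·Q_k⁻¹x_{k+1}y_{k-1}. -/
theorem stmt16 {L : Type*} [Ring L] [Algebra ℂ L]
    (n : ℕ) (φ : ℝ) (hφ : |φ| < Real.pi)
    (q q₀ : ℂ) (hq : q = Complex.exp (Complex.I * φ))
    (hq0 : q₀ = Complex.exp (Complex.I * φ / 2))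
    (lam : ℂ) (hlam : lam = q - q⁻¹)
    (x y Q Qi : ℕ → L)
    (hQinv : ∀ k, 1 ≤ k → k ≤ n + 1 → Q k * Qi k = 1 ∧ Qi k * Q k = 1)
    (hQQ : ∀ k l, Q k * Q l = Q l * Q k)
    (hyy : ∀ k l, 1 ≤ k → k < l → l ≤ n → y k * y l = q • (y l * y k))
    (hxx : ∀ k l, 1 ≤ k → k < l → l ≤ n → x k * x l = q⁻¹ • (x l * x k))
    (hxy : ∀ k l, 1 ≤ k → k ≤ n → 1 ≤ l → l ≤ n → k ≠ l →
      x l * y k = q • (y k * x l))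
    (hQy : ∀ k j, 1 ≤ j → j ≤ n → 1 ≤ k → k ≤ n + 1 →
      (j < k → Q k * y j = y j * Q k) ∧ (k ≤ j → Q k * y j = q ^ 2 • (y j * Q k)))
    (hQx : ∀ k j, 1 ≤ j → j ≤ n → 1 ≤ k → k ≤ n + 1 →
      (j < k → Q k * x j = x j * Q k) ∧ (k ≤ j → Q k * x j = q⁻¹ ^ 2 • (x j * Q k)))
    (hyx : ∀ k, 1 ≤ k → k ≤ n → y k * x k = Q (k + 1) - q⁻¹ • Q k)
    (hxyQ : ∀ k, 1 ≤ k → k ≤ n → x k * y k = Q (k + 1) - q • Q k)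
    (A : ℕ → L)
    (hA : ∀ k, 1 ≤ k → k < n →
      A k = (Complex.I * lam⁻¹ * q₀⁻¹ * q⁻¹) • (Qi (k + 1) * x (k + 1) * y k)) :
    ∀ k, 2 ≤ k → k < n →
      A (k - 1) * A k = q • (A k * A (k - 1))
        + (lam⁻¹ * q⁻¹) • (Qi k * x (k + 1) * y (k - 1)) :=
  stmt16_general n φ q q₀ hq hq0 lam hlam x y Q Qi hQinv hQQ hyy hxx hxy hQy hQx hyx hxyQ A hA
end
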